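/- arXiv:1404.6808 — 6 statements merged into one kernel-verified Lean document; each statement's English description precedes it below -/
import Mathlib

section
/- For every convex body K in Euclidean n-space ℝⁿ (n ≥ 1) one has w(K) ≤ r(K) + R(K) and r(K) + R(K) ≤ D(K). -/
/-! If `K ⊆ closedBall c ρ`, then in every unit direction `u` the lower support value of `K` is at
least `⟪u, c⟫ - ρ`, so the width bound `w ≤ sSup ⟪u, K⟫ - sInf ⟪u, K⟫` says that the ball of
radius `w - ρ` about `c` lies in every supporting half-space of `K`. By Hahn–Banach it lies in `K`,
whence `w - ρ ≤ r`. Conversely, if `closedBall c ρ ⊆ K`, every `x ∈ K` is at distance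
`dist x c + ρ` from the point of the ball opposite to `x`, so `K ⊆ closedBall c (D - ρ)` and
`R ≤ D - ρ`. -/

open Metric Set
open scoped RealInnerProductSpace

/-- The diameter of a set. -/
noncomputable def sDiam {n : ℕ} (K : Set (EuclideanSpace ℝ (Fin n))) : ℝ :=
  Metric.diam K

/-- The circumradius: radius of the smallest enclosing closed ball. -/
noncomputable def circumradius {n : ℕ} (K : Set (EuclideanSpace ℝ (Fin n))) : ℝ :=
  sInf {ρ : ℝ | 0 ≤ ρ ∧ ∃ c, K ⊆ Metric.closedBall c ρ}

/-- The inradius: radius of a largest inscribed closed ball. -/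
noncomputable def inradius {n : ℕ} (K : Set (EuclideanSpace ℝ (Fin n))) : ℝ :=
  sSup {ρ : ℝ | 0 ≤ ρ ∧ ∃ c, Metric.closedBall c ρ ⊆ K}

/-- The (minimal) width: the smallest breadth over all directions. -/
noncomputable def width {n : ℕ} (K : Set (EuclideanSpace ℝ (Fin n))) : ℝ :=
  sInf {b : ℝ | ∃ u : EuclideanSpace ℝ (Fin n), ‖u‖ = 1 ∧
    b = sSup ((fun x => (inner ℝ u x : ℝ)) '' K) - sInf ((fun x => (inner ℝ u x : ℝ)) '' K)}

section InnerProductSpace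

variable {E : Type*} [NormedAddCommGroup E] [InnerProductSpace ℝ E]

lemma abs_inner_sub_inner_le_of_mem_closedBall {u c x : E} {ρ : ℝ} (hu : ‖u‖ = 1)
    (hx : x ∈ closedBall c ρ) : |⟪u, x⟫ - ⟪u, c⟫| ≤ ρ := by
  rw [← inner_sub_right]
  calc |⟪u, x - c⟫| ≤ ‖u‖ * ‖x - c‖ := abs_real_inner_le_norm _ _
    _ ≤ ρ := by rw [hu, one_mul, ← dist_eq_norm]; exact hx

lemma isBounded_inner_image {K : Set E} (hK : Bornology.IsBounded K) (u : E) :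
    Bornology.IsBounded ((⟪u, ·⟫) '' K) :=
  (innerSL ℝ u).lipschitz.isBounded_image hK

lemma closedBall_subset_of_forall_inner_add_le_sSup [CompleteSpace E] {K : Set E}
    (hne : K.Nonempty) (hcl : IsClosed K) (hcv : Convex ℝ K) {c : E} {ρ : ℝ}
    (h : ∀ u : E, ‖u‖ = 1 → ⟪u, c⟫ + ρ ≤ sSup ((⟪u, ·⟫) '' K)) :
    closedBall c ρ ⊆ K := by
  intro x hx
  by_contra hxK
  obtain ⟨f, s, hfK, hsx⟩ := geometric_hahn_banach_closed_point hcv hcl hxK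
  set v := (InnerProductSpace.toDual ℝ E).symm f
  have hv : ∀ y, ⟪v, y⟫ = f y := fun y => InnerProductSpace.toDual_symm_apply
  have hv0 : v ≠ 0 := by
    intro hv0
    obtain ⟨y, hy⟩ := hne
    have hfy := hfK y hy
    rw [← hv, hv0, inner_zero_left] at hfy hsx
    linarith
  have hu : ‖‖v‖⁻¹ • v‖ = 1 := norm_smul_inv_norm hv0
  have hu_inner : ∀ y, ⟪‖v‖⁻¹ • v, y⟫ = ‖v‖⁻¹ * f y := fun y => by
    rw [real_inner_smul_left, hv]
  have hsup : sSup ((⟪‖v‖⁻¹ • v, ·⟫) '' K) ≤ ‖v‖⁻¹ * s := by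
    refine csSup_le (hne.image _) ?_
    rintro _ ⟨y, hy, rfl⟩
    dsimp only
    rw [hu_inner]
    exact mul_le_mul_of_nonneg_left (hfK y hy).le (by positivity)
  have hsx' : ‖v‖⁻¹ * s < ⟪‖v‖⁻¹ • v, x⟫ := by
    rw [hu_inner]
    exact mul_lt_mul_of_pos_left hsx (by positivity)
  linarith [h _ hu, le_abs_self (⟪‖v‖⁻¹ • v, x⟫ - ⟪‖v‖⁻¹ • v, c⟫),
    abs_inner_sub_inner_le_of_mem_closedBall hu hx]

end InnerProductSpace

lemma dist_add_le_diam_of_closedBall_subset {E : Type*} [NormedAddCommGroup E] [NormedSpace ℝ E]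
    [Nontrivial E] {K : Set E} (hK : Bornology.IsBounded K) {c x : E} {ρ : ℝ} (hρ : 0 ≤ ρ)
    (hball : closedBall c ρ ⊆ K) (hx : x ∈ K) : dist x c + ρ ≤ diam K := by
  rcases eq_or_ne x c with rfl | hxc
  · calc dist x x + ρ ≤ diam (closedBall x ρ) := by
          rw [dist_self, diam_closedBall_eq x hρ]; linarith
      _ ≤ diam K := diam_mono hball hK
  have hd : 0 < dist x c := dist_pos.mpr hxc
  set y := c + (ρ / dist x c) • (c - x)
  have hy : y ∈ closedBall c ρ := by
    rw [mem_closedBall, dist_eq_norm, add_sub_cancel_left, norm_smul, ← dist_eq_norm,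
      dist_comm c x, Real.norm_of_nonneg (by positivity), div_mul_cancel₀ _ hd.ne']
  have hxy : dist x y = dist x c + ρ := by
    have : y - x = (1 + ρ / dist x c) • (c - x) := by module
    rw [dist_comm, dist_eq_norm, this, norm_smul, ← dist_eq_norm, dist_comm c x,
      Real.norm_of_nonneg (by positivity)]
    field_simp
  rw [← hxy]
  exact dist_le_diam_of_mem hK hx (hball hy)

section ConvexBody

variable {n : ℕ} {K : Set (EuclideanSpace ℝ (Fin n))}

lemma inradius_nonneg : 0 ≤ inradius K :=
  Real.sSup_nonneg fun _ h => h.1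

lemma le_inradius [NeZero n] (hK : Bornology.IsBounded K) {c : EuclideanSpace ℝ (Fin n)}
    {ρ : ℝ} (hρ : 0 ≤ ρ) (h : closedBall c ρ ⊆ K) : ρ ≤ inradius K := by
  refine le_csSup ⟨diam K, ?_⟩ ⟨hρ, c, h⟩
  rintro r ⟨hr, c', hc'⟩
  simpa using dist_add_le_diam_of_closedBall_subset hK hr hc' (hc' (mem_closedBall_self hr))

lemma circumradius_le {c : EuclideanSpace ℝ (Fin n)} {ρ : ℝ} (hρ : 0 ≤ ρ)
    (h : K ⊆ closedBall c ρ) : circumradius K ≤ ρ :=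
  csInf_le ⟨0, fun _ h => h.1⟩ ⟨hρ, c, h⟩

lemma width_le_sSup_sub_sInf (hne : K.Nonempty) (hK : Bornology.IsBounded K)
    {u : EuclideanSpace ℝ (Fin n)} (hu : ‖u‖ = 1) :
    width K ≤ sSup ((⟪u, ·⟫) '' K) - sInf ((⟪u, ·⟫) '' K) := by
  refine csInf_le ⟨0, ?_⟩ ⟨u, hu, rfl⟩
  rintro _ ⟨v, -, rfl⟩
  exact sub_nonneg.mpr (csInf_le_csSup (hne.image _) (isBounded_inner_image hK v).bddBelow
    (isBounded_inner_image hK v).bddAbove)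

lemma width_le_inradius_add [NeZero n] (hne : K.Nonempty) (hcp : IsCompact K)
    (hcv : Convex ℝ K) {c : EuclideanSpace ℝ (Fin n)} {ρ : ℝ} (hK : K ⊆ closedBall c ρ) :
    width K ≤ inradius K + ρ := by
  rcases lt_or_ge (width K - ρ) 0 with hneg | hnonneg
  · linarith [inradius_nonneg (K := K)]
  suffices closedBall c (width K - ρ) ⊆ K by
    linarith [le_inradius hcp.isBounded hnonneg this]
  refine closedBall_subset_of_forall_inner_add_le_sSup hne hcp.isClosed hcv fun u hu => ?_
  have hlow : ⟪u, c⟫ - ρ ≤ sInf ((⟪u, ·⟫) '' K) := by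
    refine le_csInf (hne.image _) ?_
    rintro _ ⟨x, hx, rfl⟩
    linarith [neg_abs_le (⟪u, x⟫ - ⟪u, c⟫), abs_inner_sub_inner_le_of_mem_closedBall hu (hK hx)]
  linarith [width_le_sSup_sub_sInf hne hcp.isBounded hu]

lemma width_le_inradius_add_circumradius [NeZero n] (hne : K.Nonempty) (hcp : IsCompact K)
    (hcv : Convex ℝ K) : width K ≤ inradius K + circumradius K := by
  obtain ⟨x₀, hx₀⟩ := hne
  have hcirc : {ρ : ℝ | 0 ≤ ρ ∧ ∃ c, K ⊆ closedBall c ρ}.Nonempty :=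
    ⟨diam K, diam_nonneg, x₀, fun x hx => dist_le_diam_of_mem hcp.isBounded hx hx₀⟩
  have : width K - inradius K ≤ circumradius K := by
    refine le_csInf hcirc ?_
    rintro ρ ⟨-, c, hc⟩
    linarith [width_le_inradius_add ⟨x₀, hx₀⟩ hcp hcv hc]
  linarith

lemma inradius_add_circumradius_le_diam [NeZero n] (hne : K.Nonempty)
    (hK : Bornology.IsBounded K) : inradius K + circumradius K ≤ sDiam K := by
  obtain ⟨x₀, hx₀⟩ := hne
  have : inradius K ≤ diam K - circumradius K := by
    refine csSup_le ⟨0, le_rfl, x₀, by simpa using hx₀⟩ ?_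
    rintro ρ ⟨hρ, c, hc⟩
    have hdist : ∀ x ∈ K, dist x c + ρ ≤ diam K := fun x hx =>
      dist_add_le_diam_of_closedBall_subset hK hρ hc hx
    have : circumradius K ≤ diam K - ρ :=
      circumradius_le (by linarith [hdist x₀ hx₀, dist_nonneg (x := x₀) (y := c)])
        fun x hx => mem_closedBall.mpr (by linarith [hdist x hx])
    linarith
  unfold sDiam
  linarith

end ConvexBody

theorem width_le_inradius_add_circumradius_le_diam (n : ℕ) (hn : 1 ≤ n)
    (K : Set (EuclideanSpace ℝ (Fin n)))
    (hne : K.Nonempty) (hcp : IsCompact K) (hcv : Convex ℝ K) :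
    width K ≤ inradius K + circumradius K ∧
      inradius K + circumradius K ≤ sDiam K := by
  have : NeZero n := ⟨by omega⟩
  exact ⟨width_le_inradius_add_circumradius hne hcp hcv,
    inradius_add_circumradius_le_diam hne hcp.isBounded⟩
end

section
/- (Jung's inequality in the plane) For every convex body K in the Euclidean plane ℝ² one has √3·R(K) ≤ D(K). -/
open Metric Set
open scoped RealInnerProductSpace

/-!
Let `closedBall c R` be a smallest ball containing `K`. If all points of `K` on its boundary
sphere lay in an open half-space `⟪u, x - c⟫ > 0`, moving the centre slightly in direction `u`
would give a smaller enclosing ball. Hence `c` lies in the (closure of the) convex hull of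
`K ∩ sphere c R`, and by Carathéodory in dimension `n` any point `p = ∑ wᵢ zᵢ` of that hull is a
convex combination of at most `n + 1` such points. The variance identity
`∑ᵢⱼ wᵢ wⱼ ‖zᵢ - zⱼ‖² = 2 (R² - ‖p - c‖²)` together with `∑ wᵢ² ≥ 1 / (n + 1)` gives
`2 (n + 1) (R² - ‖p - c‖²) ≤ n D²` with `D = diam K`; at `p = c` and `n = 2` this is `3 R² ≤ D²`.
-/

open Filter Topology Finset

theorem IsCompact.exists_minimal_closedBall {α : Type*} [PseudoMetricSpace α] [ProperSpace α]
    {K : Set α} (hK : IsCompact K) (hne : K.Nonempty) :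
    ∃ c R, K ⊆ closedBall c R ∧ ∀ c', ∃ x ∈ K, R ≤ dist x c' := by
  have : Nonempty K := hne.to_subtype
  set f : α → ℝ := fun c => ⨆ x : K, dist (x : α) c
  have hbdd : ∀ c, BddAbove (range fun x : K => dist (x : α) c) := fun c =>
    (hK.image (continuous_id.dist continuous_const)).bddAbove.mono
      (range_subset_iff.2 fun x => Set.mem_image_of_mem _ x.2)
  have hle : ∀ c, ∀ x ∈ K, dist x c ≤ f c := fun c x hx => le_ciSup (hbdd c) ⟨x, hx⟩
  have hf : LowerSemicontinuous f := lowerSemicontinuous_ciSup hbdd fun x =>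
    (continuous_const.dist continuous_id).lowerSemicontinuous
  obtain ⟨x₀, hx₀⟩ := hne
  have hx₀c : x₀ ∈ closedBall x₀ (f x₀) := mem_closedBall_self (dist_nonneg.trans (hle x₀ x₀ hx₀))
  obtain ⟨c, -, hc⟩ := (hf.lowerSemicontinuousOn _).exists_isMinOn ⟨x₀, hx₀c⟩
    (isCompact_closedBall x₀ (f x₀))
  -- a minimizer on `closedBall x₀ (f x₀)` is global: outside it, `x₀` alone is farther than `f x₀`
  have hmin : ∀ c', f c ≤ f c' := fun c' => by
    by_cases h : c' ∈ closedBall x₀ (f x₀)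
    · exact hc h
    · calc f c ≤ f x₀ := hc hx₀c
        _ ≤ dist x₀ c' := by rw [dist_comm]; exact (not_le.1 h).le
        _ ≤ f c' := hle c' x₀ hx₀
  refine ⟨c, f c, fun x hx => mem_closedBall.2 (hle c x hx), fun c' => ?_⟩
  obtain ⟨x, hx, hmax⟩ :=
    hK.exists_isMaxOn ⟨x₀, hx₀⟩ (continuous_id.dist continuous_const).continuousOn
  exact ⟨x, hx, (hmin c').trans (ciSup_le fun y => hmax y.2)⟩

section InnerProductSpace

variable {E : Type*} [NormedAddCommGroup E] [InnerProductSpace ℝ E]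

theorem two_mul_inner_le_of_dist_le_dist_add_smul {x c u : E} {t : ℝ} (ht : 0 < t)
    (h : dist x c ≤ dist x (c + t • u)) : 2 * ⟪u, x - c⟫ ≤ t * ‖u‖ ^ 2 := by
  have hsq : ‖x - c‖ ^ 2 ≤ ‖(x - c) - t • u‖ ^ 2 := by
    rw [← dist_eq_norm, sub_sub, ← dist_eq_norm]
    exact pow_le_pow_left₀ dist_nonneg h 2
  rw [norm_sub_sq_real (x - c), real_inner_smul_right, norm_smul, mul_pow, Real.norm_eq_abs,
    sq_abs, real_inner_comm] at hsq
  nlinarith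

theorem exists_mem_sphere_inner_nonpos {K : Set E} (hK : IsCompact K) {c : E} {R : ℝ}
    (hsub : K ⊆ closedBall c R) (hmin : ∀ c', ∃ x ∈ K, R ≤ dist x c') (u : E) :
    ∃ x ∈ K ∩ sphere c R, ⟪u, x - c⟫ ≤ 0 := by
  -- points of `K` farthest from the centres `c + t • u`, `t → 0`, accumulate at the wanted point
  set t : ℕ → ℝ := fun k => 1 / (k + 1)
  have ht : ∀ k, 0 < t k := fun k => Nat.one_div_pos_of_nat
  choose x hxK hfar using fun k => hmin (c + t k • u)
  have hinner : ∀ k, 2 * ⟪u, x k - c⟫ ≤ t k * ‖u‖ ^ 2 := fun k =>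
    two_mul_inner_le_of_dist_le_dist_add_smul (ht k)
      ((mem_closedBall.1 (hsub (hxK k))).trans (hfar k))
  obtain ⟨y, hyK, φ, hφ, hlim⟩ := hK.tendsto_subseq hxK
  have htφ : Tendsto (t ∘ φ) atTop (𝓝 0) :=
    tendsto_one_div_add_atTop_nhds_zero_nat.comp hφ.tendsto_atTop
  have hcenter : Tendsto (fun k => c + t (φ k) • u) atTop (𝓝 c) := by
    simpa using tendsto_const_nhds.add (htφ.smul_const u)
  refine ⟨y, ⟨hyK, le_antisymm (mem_closedBall.1 (hsub hyK)) ?_⟩, ?_⟩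
  · exact ge_of_tendsto (hlim.dist hcenter) (Eventually.of_forall fun k => hfar (φ k))
  · have h := le_of_tendsto_of_tendsto'
      ((tendsto_const_nhds.inner (hlim.sub_const c)).const_mul 2) (htφ.mul_const (‖u‖ ^ 2))
      fun k => hinner (φ k)
    simp only [zero_mul] at h
    linarith

theorem mem_closure_convexHull_of_forall_exists_inner_sub_nonpos [CompleteSpace E] {S : Set E}
    {c : E} (h : ∀ u, ∃ x ∈ S, ⟪u, x - c⟫ ≤ 0) : c ∈ closure (convexHull ℝ S) := by
  by_contra hc
  obtain ⟨f, a, hfc, hf⟩ :=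
    geometric_hahn_banach_point_closed (convex_convexHull ℝ S).closure isClosed_closure hc
  obtain ⟨x, hxS, hx⟩ := h ((InnerProductSpace.toDual ℝ E).symm f)
  rw [inner_sub_right, InnerProductSpace.toDual_symm_apply, InnerProductSpace.toDual_symm_apply]
    at hx
  linarith [hf x (subset_closure (subset_convexHull ℝ S hxS))]

theorem sum_sum_mul_norm_sub_sq {ι : Type*} [Fintype ι] {w : ι → ℝ} (hw : ∑ i, w i = 1)
    (z : ι → E) (c : E) :
    ∑ i, ∑ j, w i * w j * ‖z i - z j‖ ^ 2 =
      2 * ∑ i, w i * ‖z i - c‖ ^ 2 - 2 * ‖∑ i, w i • z i - c‖ ^ 2 := by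
  set a : ι → E := fun i => z i - c
  have hcenter : ∑ i, w i • z i - c = ∑ i, w i • a i := by
    simp only [a, smul_sub, sum_sub_distrib, ← sum_smul, hw, one_smul]
  have hsq : ‖∑ i, w i • a i‖ ^ 2 = ∑ i, ∑ j, w i * w j * ⟪a i, a j⟫ := by
    simp only [← real_inner_self_eq_norm_sq, sum_inner, inner_sum, real_inner_smul_left,
      real_inner_smul_right]
    exact sum_congr rfl fun i _ => sum_congr rfl fun j _ => by
      rw [real_inner_comm (a i)]; ring
  have hleft : ∑ i, ∑ j, w i * w j * ‖a i‖ ^ 2 = ∑ i, w i * ‖a i‖ ^ 2 := by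
    simp only [← sum_mul, ← mul_sum, hw, mul_one]
  have hright : ∑ i, ∑ j, w i * w j * ‖a j‖ ^ 2 = ∑ i, w i * ‖a i‖ ^ 2 := by
    rw [sum_comm]
    simp only [mul_comm (w _) (w _), ← sum_mul, ← mul_sum, hw, mul_one]
  have hexpand : ∀ i j, w i * w j * ‖z i - z j‖ ^ 2 =
      w i * w j * ‖a i‖ ^ 2 - 2 * (w i * w j * ⟪a i, a j⟫) + w i * w j * ‖a j‖ ^ 2 :=
    fun i j => by rw [← sub_sub_sub_cancel_right (z i) (z j) c, norm_sub_sq_real]; ring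
  simp only [hexpand, sum_add_distrib, sum_sub_distrib, ← mul_sum]
  rw [hcenter, hsq, hleft, hright]
  ring

theorem two_mul_finrank_succ_mul_sq_sub_dist_sq_le [FiniteDimensional ℝ E] {S : Set E} {c : E}
    {R D : ℝ} (hS : S ⊆ sphere c R) (hD : ∀ x ∈ S, ∀ y ∈ S, dist x y ≤ D) {p : E}
    (hp : p ∈ convexHull ℝ S) :
    2 * (Module.finrank ℝ E + 1) * (R ^ 2 - dist p c ^ 2) ≤ Module.finrank ℝ E * D ^ 2 := by
  obtain ⟨ι, _, z, w, hzS, hind, hw₀, hw₁, rfl⟩ := eq_pos_convex_span_of_mem_convexHull hp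
  have hz : ∀ i, z i ∈ S := fun i => hzS (mem_range_self i)
  set n := Module.finrank ℝ E
  have hcard : (Fintype.card ι : ℝ) ≤ n + 1 := by
    exact_mod_cast hind.card_le_finrank_succ.trans (by gcongr; exact Submodule.finrank_le _)
  have hsq : 1 ≤ (Fintype.card ι : ℝ) * ∑ i, w i ^ 2 := by
    simpa [hw₁] using sq_sum_le_card_mul_sum_sq (s := univ) (f := w)
  have hvar : ∑ i, ∑ j, w i * w j * ‖z i - z j‖ ^ 2 =
      2 * (R ^ 2 - dist (∑ i, w i • z i) c ^ 2) := by
    rw [sum_sum_mul_norm_sub_sq hw₁ z c]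
    simp only [← dist_eq_norm, mem_sphere.1 (hS (hz _)), ← sum_mul, hw₁]
    ring
  -- the diagonal terms vanish; this is where `∑ wᵢ²`, hence the dimension, enters
  have hdiag : ∑ i, w i * w i * D ^ 2 ≤ ∑ i, ∑ j, w i * w j * (D ^ 2 - ‖z i - z j‖ ^ 2) := by
    refine sum_le_sum fun i _ => ?_
    calc w i * w i * D ^ 2 = w i * w i * (D ^ 2 - ‖z i - z i‖ ^ 2) := by simp
      _ ≤ _ := single_le_sum (f := fun j => w i * w j * (D ^ 2 - ‖z i - z j‖ ^ 2))
          (fun j _ => mul_nonneg (mul_nonneg (hw₀ i).le (hw₀ j).le) (sub_nonneg.2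
            (pow_le_pow_left₀ (norm_nonneg _)
              (dist_eq_norm (z i) (z j) ▸ hD _ (hz i) _ (hz j)) 2)))
          (mem_univ i)
  have hoff : ∑ i, ∑ j, w i * w j * ‖z i - z j‖ ^ 2 ≤ D ^ 2 * (1 - ∑ i, w i ^ 2) := by
    simp only [mul_sub, sum_sub_distrib, ← sum_mul, ← mul_sum, hw₁] at hdiag
    simp only [sq] at hdiag ⊢
    linarith
  have hw₂ : 0 ≤ ∑ i, w i ^ 2 := sum_nonneg fun i _ => sq_nonneg (w i)
  calc 2 * (n + 1) * (R ^ 2 - dist (∑ i, w i • z i) c ^ 2)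
      = (n + 1) * ∑ i, ∑ j, w i * w j * ‖z i - z j‖ ^ 2 := by rw [hvar]; ring
    _ ≤ (n + 1) * (D ^ 2 * (1 - ∑ i, w i ^ 2)) := by gcongr
    _ ≤ n * D ^ 2 := by
      nlinarith [mul_le_mul_of_nonneg_right hcard (mul_nonneg hw₂ (sq_nonneg D))]

theorem IsCompact.exists_closedBall_jung [FiniteDimensional ℝ E] {K : Set E} (hK : IsCompact K)
    (hne : K.Nonempty) :
    ∃ c R, K ⊆ closedBall c R ∧
      2 * (Module.finrank ℝ E + 1) * R ^ 2 ≤ Module.finrank ℝ E * diam K ^ 2 := by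
  obtain ⟨c, R, hsub, hmin⟩ := hK.exists_minimal_closedBall hne
  have hc : c ∈ closure (convexHull ℝ (K ∩ sphere c R)) :=
    mem_closure_convexHull_of_forall_exists_inner_sub_nonpos
      (exists_mem_sphere_inner_nonpos hK hsub hmin)
  have hbound : closure (convexHull ℝ (K ∩ sphere c R)) ⊆
      {p | 2 * (Module.finrank ℝ E + 1) * (R ^ 2 - dist p c ^ 2) ≤
        Module.finrank ℝ E * diam K ^ 2} :=
    closure_minimal
      (fun p hp => two_mul_finrank_succ_mul_sq_sub_dist_sq_le inter_subset_right
        (fun x hx y hy => dist_le_diam_of_mem hK.isBounded hx.1 hy.1) hp)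
      (isClosed_le (by fun_prop) continuous_const)
  exact ⟨c, R, hsub, by simpa using hbound hc⟩

end InnerProductSpace

theorem jung_plane_general (K : Set (EuclideanSpace ℝ (Fin 2)))
    (hne : K.Nonempty) (hcp : IsCompact K) :
    Real.sqrt 3 * circumradius K ≤ sDiam K := by
  obtain ⟨c, R, hsub, hR⟩ := hcp.exists_closedBall_jung hne
  rw [finrank_euclideanSpace_fin] at hR
  have hR₀ : 0 ≤ R := nonempty_closedBall.1 (hne.mono hsub)
  have hcirc : circumradius K ≤ R := csInf_le ⟨0, fun ρ hρ => hρ.1⟩ ⟨hR₀, c, hsub⟩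
  calc Real.sqrt 3 * circumradius K ≤ Real.sqrt 3 * R := by gcongr
    _ ≤ diam K := by
      refine le_of_sq_le_sq ?_ diam_nonneg
      rw [mul_pow, Real.sq_sqrt zero_le_three]
      norm_num at hR
      linarith

theorem jung_plane (K : Set (EuclideanSpace ℝ (Fin 2)))
    (hne : K.Nonempty) (hcp : IsCompact K) (hcv : Convex ℝ K) :
    Real.sqrt 3 * circumradius K ≤ sDiam K :=
  jung_plane_general K hne hcp
end

section
/- (Jung's inequality) For every convex body K in Euclidean n-space ℝⁿ (n ≥ 1) one has R(K) ≤ √( n / (2(n+1)) ) · D(K). -/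
open Metric Set
open scoped RealInnerProductSpace

/-!
For probability weights `w` on finitely many points `pᵢ`, let `V(w)` be the variance
`∑ wᵢ ‖pᵢ - c‖²` about the barycentre `c = ∑ wᵢ pᵢ`, and take `w` maximising it. Shifting mass
towards `pᵢ` shows `‖pᵢ - c‖² ≤ V(w)` for every `i`, while
`2 V(w) = ∑ wᵢ wⱼ ‖pᵢ - pⱼ‖² ≤ d² (1 - ∑ wᵢ²) ≤ d² m / (m + 1)` for `m + 1` points of diameter `d`
(the diagonal terms vanish, then Cauchy–Schwarz). Hence any `n + 1` points of `K` lie in one ball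
of radius `√(n / (2 (n + 1))) · D(K)`, and Helly's theorem applied to these balls around all
points of `K` yields a common centre.
-/

open Topology

section

variable {E : Type*} [NormedAddCommGroup E] [InnerProductSpace ℝ E] {ι : Type*} [Fintype ι]

noncomputable def weightedVariance (p : ι → E) (w : ι → ℝ) : ℝ :=
  ∑ i, w i * ‖p i‖ ^ 2 - ‖∑ i, w i • p i‖ ^ 2

theorem continuous_weightedVariance (p : ι → E) : Continuous (weightedVariance p) := by
  unfold weightedVariance; fun_prop

theorem weightedVariance_smul_add_smul_single [DecidableEq ι] (p : ι → E) (w : ι → ℝ)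
    (i : ι) (t : ℝ) :
    weightedVariance p ((1 - t) • w + t • Pi.single i 1) =
      (1 - t) * weightedVariance p w + t * (1 - t) * ‖p i - ∑ j, w j • p j‖ ^ 2 := by
  unfold weightedVariance
  set c := ∑ j, w j • p j
  have hsum : ∑ j, ((1 - t) • w + t • Pi.single i 1 : ι → ℝ) j • p j = (1 - t) • c + t • p i := by
    simp [add_smul, mul_smul, Finset.sum_add_distrib, ← Finset.smul_sum, Pi.single_apply, c]
  have hsq : ∑ j, ((1 - t) • w + t • Pi.single i 1 : ι → ℝ) j * ‖p j‖ ^ 2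
      = (1 - t) * ∑ j, w j * ‖p j‖ ^ 2 + t * ‖p i‖ ^ 2 := by
    simp [add_mul, mul_assoc, Finset.sum_add_distrib, ← Finset.mul_sum, Pi.single_apply]
  rw [hsum, hsq, norm_add_sq_real, norm_sub_sq_real, norm_smul, norm_smul,
    real_inner_smul_left, real_inner_smul_right, real_inner_comm (p i)]
  simp only [Real.norm_eq_abs, mul_pow, sq_abs]
  ring

theorem norm_sub_sq_le_weightedVariance_of_isMaxOn {p : ι → E} {w : ι → ℝ}
    (hw : w ∈ stdSimplex ℝ ι) (hmax : IsMaxOn (weightedVariance p) (stdSimplex ℝ ι) w) (i : ι) :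
    ‖p i - ∑ j, w j • p j‖ ^ 2 ≤ weightedVariance p w := by
  classical
  set Q := ‖p i - ∑ j, w j • p j‖ ^ 2
  have hmix : ∀ t ∈ Set.Ioo (0 : ℝ) 1, (1 - t) * Q ≤ weightedVariance p w := by
    rintro t ⟨ht0, ht1⟩
    have hmem : (1 - t) • w + t • Pi.single i 1 ∈ stdSimplex ℝ ι :=
      convex_stdSimplex ℝ ι hw (single_mem_stdSimplex ℝ i) (by linarith) ht0.le (by ring)
    have := hmax hmem
    rw [Set.mem_ofPred_eq, weightedVariance_smul_add_smul_single] at this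
    nlinarith
  have hlim : Filter.Tendsto (fun t : ℝ => (1 - t) * Q) (𝓝[>] 0) (𝓝 Q) := by
    have : Continuous (fun t : ℝ => (1 - t) * Q) := by fun_prop
    simpa using (this.tendsto 0).mono_left nhdsWithin_le_nhds
  exact le_of_tendsto hlim (Filter.eventually_of_mem (Ioo_mem_nhdsGT one_pos) hmix)

theorem two_mul_weightedVariance (p : ι → E) {w : ι → ℝ} (hw : ∑ j, w j = 1) :
    2 * weightedVariance p w = ∑ i, ∑ j, w i * w j * ‖p i - p j‖ ^ 2 := by
  have hc : ‖∑ i, w i • p i‖ ^ 2 = ∑ i, ∑ j, w i * w j * ⟪p i, p j⟫ := by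
    simp only [← real_inner_self_eq_norm_sq, sum_inner, inner_sum, real_inner_smul_left,
      real_inner_smul_right]
    exact Finset.sum_congr rfl fun i _ => Finset.sum_congr rfl fun j _ => by
      rw [real_inner_comm]; ring
  have hleft : ∀ f : ι → ℝ, ∑ i, ∑ j, w i * w j * f i = ∑ i, w i * f i := fun f => by
    simp only [← Finset.sum_mul, ← Finset.mul_sum, hw, mul_one]
  have hright : ∀ f : ι → ℝ, ∑ i, ∑ j, w i * w j * f j = ∑ j, w j * f j := fun f => by
    rw [Finset.sum_comm]; simp only [mul_comm (w _) (w _), hleft]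
  simp only [norm_sub_sq_real, mul_sub, mul_add, Finset.sum_sub_distrib, Finset.sum_add_distrib,
    hleft, hright]
  rw [weightedVariance, hc]
  simp only [mul_left_comm _ (2 : ℝ), ← Finset.mul_sum]
  ring

theorem weightedVariance_le_of_dist_le {p : ι → E} {w : ι → ℝ} (hw : w ∈ stdSimplex ℝ ι) {d : ℝ}
    (hd : ∀ i j, dist (p i) (p j) ≤ d) {m : ℕ} (hcard : Fintype.card ι ≤ m + 1) :
    weightedVariance p w ≤ m / (2 * (m + 1)) * d ^ 2 := by
  have hpair : ∀ i j, 0 ≤ w i * w j * (d ^ 2 - ‖p i - p j‖ ^ 2) := fun i j =>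
    mul_nonneg (mul_nonneg (hw.1 i) (hw.1 j)) <| sub_nonneg.2 <|
      pow_le_pow_left₀ (norm_nonneg _) (dist_eq_norm (p i) (p j) ▸ hd i j) 2
  have hdiag : ∀ i, w i * w i * d ^ 2 ≤ ∑ j, w i * w j * (d ^ 2 - ‖p i - p j‖ ^ 2) := fun i => by
    have := Finset.single_le_sum (fun j _ => hpair i j) (Finset.mem_univ i)
    rwa [sub_self, norm_zero, zero_pow two_ne_zero, sub_zero] at this
  have htwo : 2 * weightedVariance p w ≤ d ^ 2 * (1 - ∑ i, w i ^ 2) := by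
    have := Finset.sum_le_sum fun i (_ : i ∈ Finset.univ) => hdiag i
    have hdd : ∑ i, ∑ j, w i * w j * d ^ 2 = d ^ 2 := by
      simp only [← Finset.sum_mul, ← Finset.mul_sum, hw.2, mul_one, one_mul]
    have hww : ∑ i, w i * w i * d ^ 2 = d ^ 2 * ∑ i, w i ^ 2 := by
      rw [Finset.mul_sum]; simp only [← sq, mul_comm]
    simp only [mul_sub, Finset.sum_sub_distrib, ← two_mul_weightedVariance p hw.2, hdd, hww]
      at this
    linarith
  have hcs : 1 ≤ ((m : ℝ) + 1) * ∑ i, w i ^ 2 := by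
    have := sq_sum_le_card_mul_sum_sq (s := Finset.univ) (f := w)
    rw [hw.2, one_pow, Finset.card_univ] at this
    have hm : (Fintype.card ι : ℝ) ≤ m + 1 := by exact_mod_cast hcard
    exact this.trans (mul_le_mul_of_nonneg_right hm (Finset.sum_nonneg fun i _ => sq_nonneg _))
  rw [div_mul_eq_mul_div, le_div_iff₀ (by positivity)]
  nlinarith

theorem exists_forall_dist_le_of_card_le (p : ι → E) {d : ℝ} (hd : ∀ i j, dist (p i) (p j) ≤ d)
    {m : ℕ} (hcard : Fintype.card ι ≤ m + 1) :
    ∃ c, ∀ i, dist (p i) c ≤ √(m / (2 * (m + 1))) * d := by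
  classical
  rcases isEmpty_or_nonempty ι with hι | ⟨⟨i₀⟩⟩
  · exact ⟨0, fun i => isEmptyElim i⟩
  have hd0 : 0 ≤ d := dist_self (p i₀) ▸ hd i₀ i₀
  obtain ⟨w, hw, hmax⟩ := (isCompact_stdSimplex ℝ ι).exists_isMaxOn
    ⟨_, single_mem_stdSimplex ℝ i₀⟩ (continuous_weightedVariance p).continuousOn
  refine ⟨∑ j, w j • p j, fun i => ?_⟩
  rw [dist_eq_norm, ← Real.sqrt_sq (norm_nonneg _), ← Real.sqrt_sq hd0,
    ← Real.sqrt_mul (by positivity)]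
  exact Real.sqrt_le_sqrt ((norm_sub_sq_le_weightedVariance_of_isMaxOn hw hmax i).trans
    (weightedVariance_le_of_dist_le hw hd hcard))

theorem exists_subset_closedBall_sqrt_mul_diam [FiniteDimensional ℝ E] {K : Set E}
    (hK : Bornology.IsBounded K) :
    ∃ c, K ⊆ closedBall c
      (√(Module.finrank ℝ E / (2 * (Module.finrank ℝ E + 1))) * diam K) := by
  obtain ⟨c, hc⟩ : (⋂ x : K, closedBall (x : E)
      (√(Module.finrank ℝ E / (2 * (Module.finrank ℝ E + 1))) * diam K)).Nonempty := by
    refine Convex.helly_theorem_compact' (𝕜 := ℝ) (fun _ => convex_closedBall _ _)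
      (fun _ => isCompact_closedBall _ _) fun I hI => ?_
    obtain ⟨c, hc⟩ := exists_forall_dist_le_of_card_le (fun x : I => ((x : K) : E))
      (fun x y => dist_le_diam_of_mem hK (x : K).2 (y : K).2) (by simpa using hI)
    exact ⟨c, mem_iInter₂.2 fun x hx => mem_closedBall'.2 (hc ⟨x, hx⟩)⟩
  exact ⟨c, fun x hx => mem_closedBall'.1 (mem_iInter.1 hc ⟨x, hx⟩)⟩

end

theorem jung_inequality_general (n : ℕ)
    (K : Set (EuclideanSpace ℝ (Fin n))) (hcp : IsCompact K) :
    circumradius K ≤ Real.sqrt ((n : ℝ) / (2 * ((n : ℝ) + 1))) * sDiam K := by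
  obtain ⟨c, hc⟩ := exists_subset_closedBall_sqrt_mul_diam hcp.isBounded
  rw [finrank_euclideanSpace_fin] at hc
  exact csInf_le ⟨0, fun ρ hρ => hρ.1⟩ ⟨mul_nonneg (Real.sqrt_nonneg _) diam_nonneg, c, hc⟩

theorem jung_inequality (n : ℕ) (hn : 1 ≤ n)
    (K : Set (EuclideanSpace ℝ (Fin n)))
    (hne : K.Nonempty) (hcp : IsCompact K) (hcv : Convex ℝ K) :
    circumradius K ≤ Real.sqrt ((n : ℝ) / (2 * ((n : ℝ) + 1))) * sDiam K :=
  jung_inequality_general n K hcp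
end

section
/- Let K ⊆ C be convex bodies in Euclidean n-space ℝⁿ such that C is a completion of K, i.e. D(K) = D(C) = w(C). For λ ∈ [0,1] set K_λ := { λ·x + (1−λ)·y : x ∈ K, y ∈ C } (the Minkowski combination λK + (1−λ)C). Then D(K_λ) = D(K) and w(K_λ) = λ·w(K) + (1−λ)·w(C) for all λ ∈ [0,1]. -/
open Metric Set
open scoped RealInnerProductSpace

open scoped Pointwise

/-!
`K ⊆ K_λ ⊆ C` squeezes the diameter of `K_λ` between `D(K)` and `D(C) = D(K)`. The breadth
`b_S(u) = sup_S ⟪u, ·⟫ - inf_S ⟪u, ·⟫` of a unit direction `u` satisfies `w(S) ≤ b_S(u) ≤ D(S)`,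
so the completion `C` has constant breadth `w(C)`. Breadth is additive and positively homogeneous
under Minkowski combinations, hence `b_{K_λ}(u) = λ b_K(u) + (1 - λ) w(C)`, and taking the infimum
over `u` gives the width of `K_λ`.
-/

lemma Real.sSup_sub_sInf_le {A : Set ℝ} (hA : A.Nonempty) {d : ℝ}
    (h : ∀ p ∈ A, ∀ q ∈ A, p - q ≤ d) : sSup A - sInf A ≤ d := by
  rw [sub_le_comm]
  refine le_csInf hA fun q hq => ?_
  rw [sub_le_iff_le_add]
  exact csSup_le hA fun p hp => sub_le_iff_le_add'.1 (h p hp q hq)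

section Breadth

variable {E : Type*} [NormedAddCommGroup E] [InnerProductSpace ℝ E]

noncomputable def breadth (S : Set E) (u : E) : ℝ :=
  sSup ((fun x => (inner ℝ u x : ℝ)) '' S) - sInf ((fun x => (inner ℝ u x : ℝ)) '' S)

variable {S K C : Set E} {u : E}

lemma Bornology.IsBounded.inner_image (hS : Bornology.IsBounded S) (u : E) :
    Bornology.IsBounded ((fun x => (inner ℝ u x : ℝ)) '' S) :=
  (innerSL ℝ u).lipschitz.isBounded_image hS

lemma breadth_nonneg (hS : Bornology.IsBounded S) (u : E) : 0 ≤ breadth S u := by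
  rcases S.eq_empty_or_nonempty with rfl | hne
  · simp [breadth]
  · have hbdd := isBounded_iff_bddBelow_bddAbove.1 (hS.inner_image u)
    exact sub_nonneg.2 (csInf_le_csSup (hne.image _) hbdd.1 hbdd.2)

lemma breadth_le_diam (hS : Bornology.IsBounded S) (hu : ‖u‖ = 1) :
    breadth S u ≤ Metric.diam S := by
  rcases S.eq_empty_or_nonempty with rfl | hne
  · simp [breadth]
  refine Real.sSup_sub_sInf_le (hne.image _) ?_
  rintro _ ⟨x, hx, rfl⟩ _ ⟨y, hy, rfl⟩
  calc inner ℝ u x - inner ℝ u y = inner ℝ u (x - y) := (inner_sub_right u x y).symm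
    _ ≤ ‖u‖ * ‖x - y‖ := real_inner_le_norm u (x - y)
    _ = dist x y := by rw [hu, one_mul, dist_eq_norm]
    _ ≤ Metric.diam S := Metric.dist_le_diam_of_mem hS hx hy

lemma inner_image_image2_smul_add_smul (u : E) (a b : ℝ) (K C : Set E) :
    (fun x => (inner ℝ u x : ℝ)) '' image2 (fun x y => a • x + b • y) K C =
      a • ((fun x => (inner ℝ u x : ℝ)) '' K) + b • ((fun x => (inner ℝ u x : ℝ)) '' C) := by
  simp only [← image_smul, ← image2_add, image_image2, image2_image_left, image2_image_right,
    inner_add_right, real_inner_smul_right, smul_eq_mul]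

lemma breadth_image2_smul_add_smul {a b : ℝ} (ha : 0 ≤ a) (hb : 0 ≤ b)
    (hKne : K.Nonempty) (hK : Bornology.IsBounded K)
    (hCne : C.Nonempty) (hC : Bornology.IsBounded C) (u : E) :
    breadth (image2 (fun x y => a • x + b • y) K C) u = a * breadth K u + b * breadth C u := by
  obtain ⟨hKlo, hKhi⟩ := isBounded_iff_bddBelow_bddAbove.1 (hK.inner_image u)
  obtain ⟨hClo, hChi⟩ := isBounded_iff_bddBelow_bddAbove.1 (hC.inner_image u)
  have hKne' := (hKne.image (fun x => (inner ℝ u x : ℝ))).smul_set (a := a)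
  have hCne' := (hCne.image (fun x => (inner ℝ u x : ℝ))).smul_set (a := b)
  rw [breadth, inner_image_image2_smul_add_smul,
    csSup_add hKne' (hKhi.smul_of_nonneg ha) hCne' (hChi.smul_of_nonneg hb),
    csInf_add hKne' (hKlo.smul_of_nonneg ha) hCne' (hClo.smul_of_nonneg hb),
    Real.sSup_smul_of_nonneg ha, Real.sSup_smul_of_nonneg hb,
    Real.sInf_smul_of_nonneg ha, Real.sInf_smul_of_nonneg hb, breadth, breadth]
  simp only [smul_eq_mul]
  ring

end Breadth

section Width

variable {n : ℕ} {K C : Set (EuclideanSpace ℝ (Fin n))} {u : EuclideanSpace ℝ (Fin n)}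

lemma width_eq_sInf_breadth (K : Set (EuclideanSpace ℝ (Fin n))) :
    width K = sInf (breadth K '' sphere 0 1) := by
  simp only [width, breadth, image, mem_sphere_zero_iff_norm, eq_comm]

lemma width_le_breadth (hK : Bornology.IsBounded K) (hu : ‖u‖ = 1) : width K ≤ breadth K u := by
  rw [width_eq_sInf_breadth]
  exact csInf_le ⟨0, forall_mem_image.2 fun v _ => breadth_nonneg hK v⟩
    (mem_image_of_mem _ (mem_sphere_zero_iff_norm.2 hu))

lemma breadth_eq_width_of_sDiam_eq_width (hC : Bornology.IsBounded C) (hw : sDiam C = width C)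
    (hu : ‖u‖ = 1) : breadth C u = width C :=
  le_antisymm (hw ▸ breadth_le_diam hC hu) (width_le_breadth hC hu)

lemma width_image2_smul_add_smul_of_breadth_eq_width {a b : ℝ} (ha : 0 ≤ a) (hb : 0 ≤ b)
    (hKne : K.Nonempty) (hK : Bornology.IsBounded K)
    (hCne : C.Nonempty) (hC : Bornology.IsBounded C)
    (hCw : ∀ u ∈ sphere (0 : EuclideanSpace ℝ (Fin n)) 1, breadth C u = width C) :
    width (image2 (fun x y => a • x + b • y) K C) = a * width K + b * width C := by
  have hbreadth : breadth (image2 (fun x y => a • x + b • y) K C) '' sphere 0 1 =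
      (fun t => a * t + b * width C) '' (breadth K '' sphere 0 1) := by
    rw [image_image]
    refine image_congr fun u hu => ?_
    rw [breadth_image2_smul_add_smul ha hb hKne hK hCne hC, hCw u hu]
  rcases (sphere (0 : EuclideanSpace ℝ (Fin n)) 1).eq_empty_or_nonempty with hempty | hne
  · simp [width_eq_sInf_breadth, hempty]
  rw [width_eq_sInf_breadth, hbreadth, width_eq_sInf_breadth K]
  exact (Monotone.map_csInf_of_continuousAt (by fun_prop) (fun s t hst => by gcongr)
    (hne.image _) ⟨0, forall_mem_image.2 fun v _ => breadth_nonneg hK v⟩).symm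

end Width

theorem completion_combination_general (n : ℕ) (K C : Set (EuclideanSpace ℝ (Fin n)))
    (hKne : K.Nonempty) (hCcp : IsCompact C) (hCcv : Convex ℝ C)
    (hKC : K ⊆ C) (hDC : sDiam K = sDiam C) (hwC : sDiam C = width C) :
    ∀ lam ∈ Set.Icc (0 : ℝ) 1,
      sDiam (Set.image2 (fun x y => lam • x + (1 - lam) • y) K C) = sDiam K ∧
      width (Set.image2 (fun x y => lam • x + (1 - lam) • y) K C) =
        lam * width K + (1 - lam) * width C := by
  rintro lam ⟨hl0, hl1⟩
  have hl1' : 0 ≤ 1 - lam := sub_nonneg.2 hl1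
  have hC := hCcp.isBounded
  have hK_comb : K ⊆ image2 (fun x y => lam • x + (1 - lam) • y) K C :=
    fun x hx => ⟨x, hx, x, hKC hx, Convex.combo_self (add_sub_cancel lam 1) x⟩
  have hcomb_C : image2 (fun x y => lam • x + (1 - lam) • y) K C ⊆ C := by
    rintro _ ⟨x, hx, y, hy, rfl⟩
    exact hCcv (hKC hx) hy hl0 hl1' (add_sub_cancel lam 1)
  refine ⟨le_antisymm ?_ (Metric.diam_mono hK_comb (hC.subset hcomb_C)), ?_⟩
  · exact (Metric.diam_mono hcomb_C hC).trans_eq hDC.symm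
  · exact width_image2_smul_add_smul_of_breadth_eq_width hl0 hl1' hKne (hC.subset hKC)
      (hKne.mono hKC) hC fun u hu =>
        breadth_eq_width_of_sDiam_eq_width hC hwC (mem_sphere_zero_iff_norm.1 hu)

theorem completion_combination (n : ℕ) (K C : Set (EuclideanSpace ℝ (Fin n)))
    (hKne : K.Nonempty) (hKcp : IsCompact K) (hKcv : Convex ℝ K)
    (hCne : C.Nonempty) (hCcp : IsCompact C) (hCcv : Convex ℝ C)
    (hKC : K ⊆ C) (hDC : sDiam K = sDiam C) (hwC : sDiam C = width C) :
    ∀ lam ∈ Set.Icc (0 : ℝ) 1,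
      sDiam (Set.image2 (fun x y => lam • x + (1 - lam) • y) K C) = sDiam K ∧
      width (Set.image2 (fun x y => lam • x + (1 - lam) • y) K C) =
        lam * width K + (1 - lam) * width C :=
  completion_combination_general n K C hKne hCcp hCcv hKC hDC hwC
end

section
/- Let K be a convex body in Euclidean n-space ℝⁿ, c ∈ ℝⁿ and ρ ≥ 0 with closedBall(c, ρ) ⊆ K ⊆ closedBall(0,1), where ρ = r(K) is the inradius of K and R(K) = 1. Let p¹, …, p^k ∈ K be finitely many points with ‖pⁱ‖ = 1 for all i and 0 ∈ conv{p¹, …, p^k}, and set C := conv( {p¹, …, p^k} ∪ closedBall(c, ρ) ). Then D(C) = max( D(conv{p¹, …, p^k}), max_{i} ( ‖pⁱ − c‖ + ρ ) ). -/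
/-!
By `convexHull_diam` it suffices to compute the diameter of the union of the points and the
ball. A point `pⁱ` is at distance at most `‖pⁱ - c‖ + ρ` from the ball, with equality at the
point of the ball on the far side of `c`. Two points of the ball are at most `2ρ` apart, and
`2ρ ≤ ‖pⁱ - c‖ + ρ` because the ball lies in the unit ball while `pⁱ` lies on the unit sphere.
-/

open Metric Set
open scoped RealInnerProductSpace

section PseudoMetric

variable {α ι : Type*} [PseudoMetricSpace α]

theorem diam_range_union_closedBall_le [Finite ι] [Nonempty ι] {p : ι → α} {c : α} {ρ : ℝ}
    (hρ : ∀ i, ρ ≤ dist (p i) c) :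
    diam (range p ∪ closedBall c ρ) ≤ max (diam (range p)) (⨆ i, dist (p i) c + ρ) := by
  set M := ⨆ i, dist (p i) c + ρ
  have hbdd : BddAbove (range fun i ↦ dist (p i) c + ρ) := (finite_range _).bddAbove
  have to_ball (i : ι) (y : α) (hy : y ∈ closedBall c ρ) : dist (p i) y ≤ M :=
    calc dist (p i) y ≤ dist (p i) c + dist y c := dist_triangle_right _ _ _
      _ ≤ dist (p i) c + ρ := add_le_add_right hy _
      _ ≤ M := le_ciSup hbdd i
  refine diam_le_of_forall_dist_le (le_max_of_le_left diam_nonneg) ?_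
  rintro x (⟨i, rfl⟩ | hx) y (⟨j, rfl⟩ | hy)
  · exact le_max_of_le_left (dist_le_diam_of_mem (finite_range p).isBounded ⟨i, rfl⟩ ⟨j, rfl⟩)
  · exact le_max_of_le_right (to_ball i y hy)
  · exact le_max_of_le_right (dist_comm x (p j) ▸ to_ball j x hx)
  · obtain ⟨i⟩ := ‹Nonempty ι›
    refine le_max_of_le_right ?_
    calc dist x y ≤ dist x c + dist y c := dist_triangle_right _ _ _
      _ ≤ ρ + ρ := add_le_add hx hy
      _ ≤ dist (p i) c + ρ := by linarith [hρ i]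
      _ ≤ M := le_ciSup hbdd i

end PseudoMetric

section NormedSpace

variable {E : Type*} [NormedAddCommGroup E] [NormedSpace ℝ E] [Nontrivial E]

theorem exists_mem_closedBall_dist_eq_dist_add (x c : E) {ρ : ℝ} (hρ : 0 ≤ ρ) :
    ∃ z ∈ closedBall c ρ, dist x z = dist x c + ρ := by
  rcases eq_or_ne x c with rfl | hxc
  · obtain ⟨u, hu⟩ := exists_norm_eq E hρ
    exact ⟨x + u, by simp [hu], by simp [hu]⟩
  · -- push `c` away from `x` by `ρ`, along the line through `x` and `c`
    have hd : 0 < dist x c := dist_pos.mpr hxc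
    refine ⟨AffineMap.lineMap x c (1 + ρ / dist x c), ?_, ?_⟩
    · rw [mem_closedBall, dist_lineMap_right, sub_add_cancel_left, norm_neg, Real.norm_eq_abs,
        abs_of_nonneg (by positivity), div_mul_cancel₀ _ hd.ne']
    · rw [dist_comm, dist_lineMap_left, Real.norm_eq_abs, abs_of_nonneg (by positivity),
        add_mul, one_mul, div_mul_cancel₀ _ hd.ne']

theorem add_dist_le_of_closedBall_subset_closedBall {c a : E} {ρ R : ℝ} (hρ : 0 ≤ ρ)
    (h : closedBall c ρ ⊆ closedBall a R) : dist a c + ρ ≤ R := by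
  obtain ⟨z, hz, hdist⟩ := exists_mem_closedBall_dist_eq_dist_add a c hρ
  rw [← hdist, dist_comm]
  exact h hz

theorem dist_add_le_diam_union_closedBall {s : Set E} (hs : Bornology.IsBounded s) {x : E}
    (hx : x ∈ s) (c : E) {ρ : ℝ} (hρ : 0 ≤ ρ) : dist x c + ρ ≤ diam (s ∪ closedBall c ρ) := by
  obtain ⟨z, hz, hdist⟩ := exists_mem_closedBall_dist_eq_dist_add x c hρ
  rw [← hdist]
  exact dist_le_diam_of_mem (hs.union isBounded_closedBall) (.inl hx) (.inr hz)

theorem diam_range_union_closedBall {ι : Type*} [Finite ι] [Nonempty ι] {p : ι → E} {c : E}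
    {ρ : ℝ} (h₀ : 0 ≤ ρ) (hρ : ∀ i, ρ ≤ dist (p i) c) :
    diam (range p ∪ closedBall c ρ) = max (diam (range p)) (⨆ i, dist (p i) c + ρ) := by
  have hp : Bornology.IsBounded (range p) := (finite_range p).isBounded
  refine (diam_range_union_closedBall_le hρ).antisymm (max_le ?_ ?_)
  · exact diam_mono subset_union_left (hp.union isBounded_closedBall)
  · exact ciSup_le fun i ↦ dist_add_le_diam_union_closedBall hp ⟨i, rfl⟩ c h₀

end NormedSpace

theorem diam_of_hull_points_ball_general (n : ℕ) (K : Set (EuclideanSpace ℝ (Fin n)))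
    (c : EuclideanSpace ℝ (Fin n)) (ρ : ℝ) (hρ : 0 ≤ ρ)
    (hball : Metric.closedBall c ρ ⊆ K) (hsub : K ⊆ Metric.closedBall 0 1)
    (k : ℕ) (hk : 0 < k) (p : Fin k → EuclideanSpace ℝ (Fin n))
    (hpn : ∀ i, ‖p i‖ = 1) :
    sDiam (convexHull ℝ (Set.range p ∪ Metric.closedBall c ρ)) =
      max (sDiam (convexHull ℝ (Set.range p))) (⨆ i, (‖p i - c‖ + ρ)) := by
  have : Nonempty (Fin k) := ⟨⟨0, hk⟩⟩
  have : Nontrivial (EuclideanSpace ℝ (Fin n)) :=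
    nontrivial_of_ne (p ⟨0, hk⟩) 0 (norm_ne_zero_iff.mp (by simp [hpn]))
  have hc : dist 0 c + ρ ≤ 1 := add_dist_le_of_closedBall_subset_closedBall hρ (hball.trans hsub)
  have hfar (i : Fin k) : ρ ≤ dist (p i) c := by
    have := dist_triangle (p i) c 0
    rw [dist_zero_right, hpn, dist_comm c] at this
    linarith
  simp only [sDiam, convexHull_diam, ← dist_eq_norm]
  exact diam_range_union_closedBall hρ hfar

theorem diam_of_hull_points_ball (n : ℕ) (K : Set (EuclideanSpace ℝ (Fin n)))
    (hne : K.Nonempty) (hcp : IsCompact K) (hcv : Convex ℝ K)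
    (c : EuclideanSpace ℝ (Fin n)) (ρ : ℝ) (hρ : 0 ≤ ρ)
    (hball : Metric.closedBall c ρ ⊆ K) (hsub : K ⊆ Metric.closedBall 0 1)
    (hρr : ρ = inradius K) (hR : circumradius K = 1)
    (k : ℕ) (hk : 0 < k) (p : Fin k → EuclideanSpace ℝ (Fin n))
    (hpK : ∀ i, p i ∈ K) (hpn : ∀ i, ‖p i‖ = 1)
    (h0 : (0 : EuclideanSpace ℝ (Fin n)) ∈ convexHull ℝ (Set.range p)) :
    sDiam (convexHull ℝ (Set.range p ∪ Metric.closedBall c ρ)) =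
      max (sDiam (convexHull ℝ (Set.range p))) (⨆ i, (‖p i - c‖ + ρ)) :=
  diam_of_hull_points_ball_general n K c ρ hρ hball hsub k hk p hpn
end

section
/- Let K be a convex body in Euclidean n-space ℝⁿ with K ⊆ closedBall(0,1). Then R(K) = 1 if and only if there exist k with 2 ≤ k ≤ n+1 and points p¹, …, p^k ∈ K with ‖pⁱ‖ = 1 for all i and 0 ∈ conv{p¹, …, p^k}. -/
open Metric Set
open scoped RealInnerProductSpace

/-!
If `0` lies in the convex hull of the points where `K` touches the unit sphere, then for every
center `c` one of these points `p` satisfies `⟪p, c⟫ ≤ 0`, hence `‖p - c‖² ≥ 1 + ‖c‖² ≥ 1`, so no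
ball of radius `< 1` contains `K`. Conversely, if `0` is not in that convex hull (which is compact),
a vector `v` separates it strictly from the contact points; moving the center from `0` to `ε • v`
for small `ε > 0` pulls the contact points strictly inside the unit ball, while the remaining part
of `K` already lies in a ball of radius `< 1` about `0`. Carathéodory's theorem bounds the number
of contact points needed by `n + 1`, and a single point cannot suffice since `‖p‖ = 1`.
-/

open Module

theorem IsCompact.exists_lt_forall_le_of_forall_lt {α β : Type*} [LinearOrder α]
    [TopologicalSpace α] [ClosedIciTopology α] [NoMinOrder α] [TopologicalSpace β]
    {s : Set β} (hs : IsCompact s) {f : β → α} (hf : ContinuousOn f s) {a : α}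
    (h : ∀ x ∈ s, f x < a) : ∃ b < a, ∀ x ∈ s, f x ≤ b := by
  rcases s.eq_empty_or_nonempty with rfl | hne
  · obtain ⟨b, hb⟩ := exists_lt a
    exact ⟨b, hb, by simp⟩
  · obtain ⟨x, hx, hmax⟩ := hs.exists_isMaxOn hne hf
    exact ⟨f x, h x hx, fun y hy => hmax hy⟩

theorem two_le_of_mem_convexHull_range_of_notMem {E : Type*} [AddCommGroup E] [Module ℝ E]
    {k : ℕ} {p : Fin k → E} {x : E} (hx : x ∈ convexHull ℝ (range p)) (hxp : x ∉ range p) :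
    2 ≤ k := by
  by_contra! hk
  interval_cases k
  · simp at hx
  · rw [range_unique, convexHull_singleton] at hx
    exact hxp (by simp_all)

section InnerProductSpace

variable {E : Type*} [NormedAddCommGroup E] [InnerProductSpace ℝ E]

theorem exists_inner_nonpos_of_zero_mem_convexHull {S : Set E}
    (h0 : (0 : E) ∈ convexHull ℝ S) (c : E) : ∃ p ∈ S, ⟪c, p⟫ ≤ 0 := by
  by_contra! h
  have hS : convexHull ℝ S ⊆ {x | 0 < ⟪c, x⟫} :=
    convexHull_min h ((convex_Ioi 0).linear_preimage (innerSL ℝ c).toLinearMap)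
  simpa using hS h0

theorem one_le_of_subset_closedBall_of_zero_mem_convexHull {S : Set E} (hS : S ⊆ sphere 0 1)
    (h0 : (0 : E) ∈ convexHull ℝ S) {c : E} {ρ : ℝ} (hc : S ⊆ closedBall c ρ) : 1 ≤ ρ := by
  obtain ⟨p, hpS, hcp⟩ := exists_inner_nonpos_of_zero_mem_convexHull h0 c
  have hp : ‖p‖ = 1 := mem_sphere_zero_iff_norm.1 (hS hpS)
  have hpc : ‖p - c‖ ≤ ρ := mem_closedBall_iff_norm.1 (hc hpS)
  have : 1 ≤ ‖p - c‖ ^ 2 := by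
    rw [norm_sub_sq_real, hp, real_inner_comm]
    nlinarith [sq_nonneg ‖c‖]
  nlinarith [norm_nonneg (p - c)]

theorem norm_sub_smul_lt_one {x v : E} {ε : ℝ} (hx : ‖x‖ ≤ 1) (hε : 0 < ε)
    (hεv : ε * ‖v‖ ^ 2 < 2 * ⟪x, v⟫) : ‖x - ε • v‖ < 1 := by
  have hsq : ‖x - ε • v‖ ^ 2 < 1 := by
    rw [norm_sub_sq_real, real_inner_smul_right, norm_smul, Real.norm_of_nonneg hε.le]
    nlinarith [norm_nonneg x]
  nlinarith [norm_nonneg (x - ε • v)]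

variable [FiniteDimensional ℝ E]

theorem exists_fin_weights_of_mem_convexHull {s : Set E} {x : E} (hx : x ∈ convexHull ℝ s) :
    ∃ k ≤ finrank ℝ E + 1, ∃ (w : Fin k → ℝ) (z : Fin k → E), (∀ i, 0 ≤ w i) ∧
      ∑ i, w i = 1 ∧ (∀ i, z i ∈ s) ∧ ∑ i, w i • z i = x := by
  obtain ⟨ι, _, z, w, hzs, hz, hw0, hw1, hwz⟩ := eq_pos_convex_span_of_mem_convexHull hx
  have hcard : Fintype.card ι ≤ finrank ℝ E + 1 :=
    hz.card_le_finrank_succ.trans (Nat.succ_le_succ (Submodule.finrank_le _))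
  let e := Fintype.equivFin ι
  refine ⟨_, hcard, w ∘ e.symm, z ∘ e.symm, fun i => (hw0 _).le, ?_,
    fun i => hzs (mem_range_self _), ?_⟩
  · exact (e.symm.sum_comp w).trans hw1
  · exact (e.symm.sum_comp fun i => w i • z i).trans hwz

theorem isCompact_convexHull {S : Set E} (hS : IsCompact S) : IsCompact (convexHull ℝ S) := by
  have hcarath : convexHull ℝ S = ⋃ k ∈ Finset.range (finrank ℝ E + 2),
      (fun q : (Fin k → ℝ) × (Fin k → E) => ∑ i, q.1 i • q.2 i) ''
        (stdSimplex ℝ (Fin k) ×ˢ univ.pi fun _ => S) := by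
    refine Subset.antisymm (fun x hx => ?_) ?_
    · obtain ⟨k, hk, w, z, hw0, hw1, hzS, rfl⟩ := exists_fin_weights_of_mem_convexHull hx
      exact mem_biUnion (Finset.mem_range.2 (by omega))
        ⟨(w, z), ⟨⟨hw0, hw1⟩, fun i _ => hzS i⟩, rfl⟩
    · simp only [iUnion_subset_iff]
      rintro k - _ ⟨⟨w, z⟩, ⟨hw, hz⟩, rfl⟩
      exact mem_convexHull_of_exists_fintype w z hw.1 hw.2 (fun i => hz i trivial) rfl
  rw [hcarath]
  exact (Finset.range _).isCompact_biUnion fun k _ =>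
    ((isCompact_stdSimplex ℝ _).prod (isCompact_univ_pi fun _ => hS)).image (by fun_prop)

theorem exists_forall_lt_inner_of_zero_notMem_convexHull {S : Set E} (hS : IsCompact S)
    (h0 : (0 : E) ∉ convexHull ℝ S) : ∃ v : E, ∃ u > 0, ∀ x ∈ S, u < ⟪x, v⟫ := by
  obtain ⟨f, u, hf0, hfS⟩ := geometric_hahn_banach_point_closed (convex_convexHull ℝ S)
    (isCompact_convexHull hS).isClosed h0
  refine ⟨(InnerProductSpace.toDual ℝ E).symm f, u, by simpa using hf0, fun x hx => ?_⟩
  rw [real_inner_comm, InnerProductSpace.toDual_symm_apply]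
  exact hfS x (subset_convexHull ℝ S hx)

theorem exists_subset_closedBall_lt_one_of_zero_notMem_convexHull {K : Set E}
    (hK : IsCompact K) (hK1 : K ⊆ closedBall 0 1)
    (h0 : (0 : E) ∉ convexHull ℝ (K ∩ sphere 0 1)) : ∃ c, ∃ ρ < 1, K ⊆ closedBall c ρ := by
  obtain ⟨v, u, hu, huv⟩ :=
    exists_forall_lt_inner_of_zero_notMem_convexHull (hK.inter_right isClosed_sphere) h0
  have hnorm : ∀ x ∈ K, ‖x‖ ≤ 1 := fun x hx => mem_closedBall_zero_iff.1 (hK1 hx)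
  -- the part of `K` not separated by `v` stays away from the unit sphere
  have hA : IsCompact (K ∩ {x | ⟪x, v⟫ ≤ u}) :=
    hK.inter_right (isClosed_le (by fun_prop) continuous_const)
  obtain ⟨r, hr, hrK⟩ := hA.exists_lt_forall_le_of_forall_lt continuous_norm.continuousOn
    (a := 1) fun x ⟨hxK, hxv⟩ => (hnorm x hxK).lt_of_ne fun hx1 =>
      (huv x ⟨hxK, mem_sphere_zero_iff_norm.2 hx1⟩).not_ge hxv
  obtain ⟨ε, hε, hεv⟩ := exists_pos_mul_lt (lt_min (by positivity : 0 < 2 * u) (sub_pos.2 hr))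
    (‖v‖ ^ 2 + ‖v‖)
  have hε_sep : (‖v‖ ^ 2 + ‖v‖) * ε < 2 * u := hεv.trans_le (min_le_left _ _)
  have hε_gap : (‖v‖ ^ 2 + ‖v‖) * ε < 1 - r := hεv.trans_le (min_le_right _ _)
  have hball : ∀ x ∈ K, ‖x - ε • v‖ < 1 := by
    intro x hx
    rcases lt_or_ge u ⟪x, v⟫ with hxv | hxv
    · exact norm_sub_smul_lt_one (hnorm x hx) hε (by nlinarith [norm_nonneg v])
    · calc ‖x - ε • v‖ ≤ ‖x‖ + ε * ‖v‖ := by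
            simpa [norm_smul, Real.norm_of_nonneg hε.le] using norm_sub_le x (ε • v)
        _ < 1 := by nlinarith [hrK x ⟨hx, hxv⟩, sq_nonneg ‖v‖]
  obtain ⟨ρ, hρ, hρK⟩ := hK.exists_lt_forall_le_of_forall_lt
    (continuous_norm.comp (continuous_sub_right _)).continuousOn hball
  exact ⟨ε • v, ρ, hρ, fun x hx => mem_closedBall_iff_norm.2 (hρK x hx)⟩

end InnerProductSpace

section Circumradius

variable {n : ℕ} {K : Set (EuclideanSpace ℝ (Fin n))}

theorem circumradius_le_of_subset_closedBall (hK : K.Nonempty) {c : EuclideanSpace ℝ (Fin n)}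
    {ρ : ℝ} (h : K ⊆ closedBall c ρ) : circumradius K ≤ ρ :=
  csInf_le ⟨0, fun _ hρ => hρ.1⟩ ⟨nonempty_closedBall.1 (hK.mono h), c, h⟩

theorem le_circumradius (hK : Bornology.IsBounded K) {a : ℝ}
    (h : ∀ c ρ, K ⊆ closedBall c ρ → a ≤ ρ) : a ≤ circumradius K := by
  obtain ⟨ρ, hρ, hKρ⟩ := hK.subset_closedBall_lt 0 0
  exact le_csInf ⟨ρ, hρ.le, 0, hKρ⟩ fun ρ ⟨_, c, hc⟩ => h c ρ hc

end Circumradius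

theorem circumradius_eq_one_iff_general (n : ℕ) (K : Set (EuclideanSpace ℝ (Fin n)))
    (hne : K.Nonempty) (hcp : IsCompact K)
    (hsub : K ⊆ Metric.closedBall 0 1) :
    circumradius K = 1 ↔
      ∃ (k : ℕ) (p : Fin k → EuclideanSpace ℝ (Fin n)),
        2 ≤ k ∧ k ≤ n + 1 ∧ (∀ i, p i ∈ K) ∧ (∀ i, ‖p i‖ = 1) ∧
        (0 : EuclideanSpace ℝ (Fin n)) ∈ convexHull ℝ (Set.range p) := by
  have hle : circumradius K ≤ 1 := circumradius_le_of_subset_closedBall hne hsub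
  constructor
  · intro h
    have h0 : (0 : EuclideanSpace ℝ (Fin n)) ∈ convexHull ℝ (K ∩ sphere 0 1) := by
      by_contra h0
      obtain ⟨c, ρ, hρ, hKρ⟩ :=
        exists_subset_closedBall_lt_one_of_zero_notMem_convexHull hcp hsub h0
      exact (circumradius_le_of_subset_closedBall hne hKρ).not_gt (h ▸ hρ)
    obtain ⟨k, hk, w, p, hw0, hw1, hpS, hwp⟩ := exists_fin_weights_of_mem_convexHull h0
    have hp1 : ∀ i, ‖p i‖ = 1 := fun i => mem_sphere_zero_iff_norm.1 (hpS i).2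
    have h0p := mem_convexHull_of_exists_fintype w p hw0 hw1 mem_range_self hwp
    refine ⟨k, p, two_le_of_mem_convexHull_range_of_notMem h0p ?_, by simpa using hk,
      fun i => (hpS i).1, hp1, h0p⟩
    rintro ⟨i, hi⟩
    simpa [hi] using hp1 i
  · rintro ⟨k, p, -, -, hpK, hp1, h0⟩
    refine hle.antisymm (le_circumradius (isBounded_closedBall.subset hsub) fun c ρ hc => ?_)
    exact one_le_of_subset_closedBall_of_zero_mem_convexHull
      (range_subset_iff.2 fun i => mem_sphere_zero_iff_norm.2 (hp1 i)) h0
      (range_subset_iff.2 fun i => hc (hpK i))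

theorem circumradius_eq_one_iff (n : ℕ) (K : Set (EuclideanSpace ℝ (Fin n)))
    (hne : K.Nonempty) (hcp : IsCompact K) (hcv : Convex ℝ K)
    (hsub : K ⊆ Metric.closedBall 0 1) :
    circumradius K = 1 ↔
      ∃ (k : ℕ) (p : Fin k → EuclideanSpace ℝ (Fin n)),
        2 ≤ k ∧ k ≤ n + 1 ∧ (∀ i, p i ∈ K) ∧ (∀ i, ‖p i‖ = 1) ∧
        (0 : EuclideanSpace ℝ (Fin n)) ∈ convexHull ℝ (Set.range p) :=
  circumradius_eq_one_iff_general n K hne hcp hsub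
end
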